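/- arXiv:2011.08564 — 4 statements merged into one kernel-verified Lean document; each statement's English description precedes it below -/
import Mathlib

section
/- Let 0 < τ_p < τ_n < τ_l, let β ∈ (τ_p/(τ_p+τ_n), 1], let k > 0, and set λ = (1/τ_p + 1/τ_n)/2. Then for every ω ∈ ℝ, Re G(−λ + iω, k, β) > 0, i.e. the shifted transfer function G(s − λ, k, β) is positive real on the imaginary axis. -/
open Complex

/-- Open-loop transfer function of the mixed feedback amplifier. -/
noncomputable def G (τl τp τn k β : ℝ) (s : ℂ) : ℂ :=
  -(k : ℂ) * (((β * (τn + τp) - τp : ℝ) : ℂ) * s + ((2 * β - 1 : ℝ) : ℂ)) /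
    (((τl : ℂ) * s + 1) * ((τp : ℂ) * s + 1) * ((τn : ℂ) * s + 1))

set_option maxHeartbeats 1000000 in
theorem stmt2 (τl τp τn β k : ℝ)
    (hτp : 0 < τp) (hτn : τp < τn) (hτl : τn < τl)
    (hβ : β ∈ Set.Ioc (τp / (τp + τn)) 1) (hk : 0 < k) :
    ∀ ω : ℝ,
      0 < (G τl τp τn k β (-(((1/τp + 1/τn)/2 : ℝ) : ℂ) + Complex.I * (ω : ℂ))).re := by
  intro ω
  have hτn0 : 0 < τn := hτp.trans hτn
  have hτl0 : 0 < τl := hτn0.trans hτl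
  set lam : ℝ := (1/τp + 1/τn)/2 with hlam
  set s : ℂ := -(lam : ℂ) + Complex.I * (ω : ℂ) with hs
  clear_value s
  clear_value lam
  set c : ℝ := β * (τn + τp) - τp with hc
  set d : ℝ := 2 * β - 1 with hd
  set q : ℝ := (τn - τp)^2/(4*τp*τn) + τp*τn*ω^2 with hq
  clear_value c d q
  have hβ0 : 0 < β := lt_of_le_of_lt (by positivity) hβ.1
  have hcpos : 0 < c := by
    have := hβ.1
    rw [div_lt_iff₀ (by linarith)] at this
    rw [hc]; nlinarith
  have hqpos : 0 < q := by
    have h1 : 0 < (τn - τp)^2/(4*τp*τn) := by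
      apply div_pos (by nlinarith) (by nlinarith)
    have h2 : (0:ℝ) ≤ τp*τn*ω^2 := by positivity
    rw [hq]; linarith
  have hAneg : τl * (-lam) + 1 < 0 := by
    have h1 : 1/τn < 1/τp := one_div_lt_one_div_of_lt hτp hτn
    have h2 : 1/τn < lam := by rw [hlam]; linarith
    have h3 : τn * (1/τn) = 1 := mul_one_div_cancel (ne_of_gt hτn0)
    nlinarith [mul_lt_mul_of_pos_left h2 hτl0, mul_lt_mul_of_pos_right hτl (by positivity : (0:ℝ) < 1/τn)]
  have hdneg : c * (-lam) + d < 0 := by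
    have key : 2*τp*τn*(c * (-lam) + d) = -β*(τn-τp)^2 - τp*(τn-τp) := by
      rw [hlam, hc, hd]; field_simp; ring
    have hrhs : -β*(τn-τp)^2 - τp*(τn-τp) < 0 := by nlinarith
    by_contra h
    push_neg at h
    nlinarith [mul_nonneg (by positivity : (0:ℝ) ≤ 2*τp*τn) h]
  have hprod : ((τp:ℂ) * s + 1) * ((τn:ℂ)*s+1) = ((-q : ℝ) : ℂ) := by
    rw [hs, hq]
    simp only [Complex.ext_iff, Complex.mul_re, Complex.mul_im, Complex.add_re,
      Complex.add_im, Complex.ofReal_re, Complex.ofReal_im, Complex.I_re, Complex.I_im,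
      Complex.neg_re, Complex.neg_im, Complex.one_re, Complex.one_im]
    constructor
    · rw [hlam]; field_simp; ring
    · rw [hlam]; field_simp; ring
  have hA : ((τl:ℂ)*s + 1) ≠ 0 := by
    intro h
    have h0 : ((τl:ℂ)*s + 1).re = 0 := by rw [h]; simp
    rw [hs] at h0
    simp [Complex.mul_re] at h0
    nlinarith
  have hqC : ((q:ℝ):ℂ) ≠ 0 := by
    simp only [ne_eq, Complex.ofReal_eq_zero]; exact ne_of_gt hqpos
  have hG : G τl τp τn k β s = ((k/q : ℝ) : ℂ) * ((((c:ℝ):ℂ) * s + ((d:ℝ):ℂ)) / ((τl:ℂ)*s + 1)) := by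
    rw [G, mul_assoc (((τl:ℂ)*s + 1)), hprod, ← hc, ← hd]
    push_cast
    field_simp
    try ring
    try tauto
  rw [hG, Complex.re_ofReal_mul, Complex.div_re]
  have hNre : ((((c:ℝ):ℂ) * s + ((d:ℝ):ℂ)).re) = c * (-lam) + d := by
    rw [hs]; simp [Complex.mul_re]
  have hNim : ((((c:ℝ):ℂ) * s + ((d:ℝ):ℂ)).im) = c * ω := by
    rw [hs]; simp [Complex.mul_im]
  have hAre : (((τl:ℂ)*s + 1).re) = τl * (-lam) + 1 := by
    rw [hs]; simp [Complex.mul_re]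
  have hAim : (((τl:ℂ)*s + 1).im) = τl * ω := by
    rw [hs]; simp [Complex.mul_im]
  have hnsq : Complex.normSq ((τl:ℂ)*s + 1) = (τl * (-lam) + 1)^2 + (τl * ω)^2 := by
    rw [Complex.normSq_apply, hAre, hAim]; ring
  rw [hNre, hNim, hAre, hAim, hnsq]
  apply mul_pos (div_pos hk hqpos)
  apply add_pos_of_pos_of_nonneg
  · apply div_pos
    · nlinarith [mul_pos_of_neg_of_neg hdneg hAneg, mul_pos hcpos hτl0, sq_nonneg ω]
    · nlinarith [sq_nonneg (τl * ω)]
  · apply div_nonneg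
    · nlinarith [mul_pos hcpos hτl0, sq_nonneg ω]
    · nlinarith [sq_nonneg (τl * ω)]
end

section
/- Let 0 < τ_l < τ_p < τ_n, let β ∈ (τ_p/(τ_p+τ_n), 1], let k > 0, and set λ = (1/τ_l + 1/τ_p)/2. Then for every ω ∈ ℝ, Re G(−λ + iω, k, β) > 0, i.e. the shifted transfer function G(s − λ, k, β) is positive real on the imaginary axis. -/
open Complex

/-!
With `λ` midway between `1/τ_l` and `1/τ_p`, the points `s = -λ + iω` are equidistant from the poles
`-1/τ_l` and `-1/τ_p`, which are mirror images of each other across the line `Re s = -λ`. Hence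
`(τ_l s + 1)(τ_p s + 1) = -τ_l τ_p (μ² + ω²)` with `μ = (1/τ_l - 1/τ_p)/2` is a negative real number,
and `Re G(s)` has the sign of `Re ((a s + b)/(τ_n s + 1))` with `a = β(τ_n + τ_p) - τ_p`, `b = 2β - 1`.
This is positive because `a > 0` (the balance exceeds `β*`), and both the zero `-b/a` and the pole
`-1/τ_n` lie to the right of `-λ`.
-/

theorem mul_add_one_mul_add_one_at_midpoint {c d : ℝ} (hc : c ≠ 0) (hd : d ≠ 0) (ω : ℝ) :
    ((c : ℂ) * (-(((1/c + 1/d)/2 : ℝ) : ℂ) + I * ω) + 1) *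
        ((d : ℂ) * (-(((1/c + 1/d)/2 : ℝ) : ℂ) + I * ω) + 1) =
      -((c * d * (((1/c - 1/d)/2) ^ 2 + ω ^ 2) : ℝ) : ℂ) := by
  have hc' : (c : ℂ) ≠ 0 := ofReal_ne_zero.2 hc
  have hd' : (d : ℂ) ≠ 0 := ofReal_ne_zero.2 hd
  push_cast
  field_simp
  linear_combination (4 * c ^ 2 * d ^ 2 * ω ^ 2 : ℂ) * I_sq

theorem re_affine_div_affine_pos {a b c l ω : ℝ} (hac : 0 ≤ a * c) (hb : b < a * l)
    (hcl : 1 < c * l) :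
    0 < (((a : ℂ) * (-(l : ℂ) + I * ω) + b) / ((c : ℂ) * (-(l : ℂ) + I * ω) + 1)).re := by
  set z : ℂ := (a : ℂ) * (-(l : ℂ) + I * ω) + b
  set w : ℂ := (c : ℂ) * (-(l : ℂ) + I * ω) + 1
  have hz : z.re = -(a * l) + b ∧ z.im = a * ω := ⟨by simp [z], by simp [z]⟩
  have hw : w.re = -(c * l) + 1 ∧ w.im = c * ω := ⟨by simp [w], by simp [w]⟩
  have hw0 : w ≠ 0 := fun h => by linarith [hw.1, congrArg Complex.re h, zero_re]
  rw [Complex.div_re, ← add_div, hz.1, hz.2, hw.1, hw.2]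
  refine div_pos ?_ (Complex.normSq_pos.2 hw0)
  nlinarith [mul_pos (sub_pos.2 hb) (sub_pos.2 hcl), mul_nonneg hac (sq_nonneg ω)]

section Balance

variable {τp τn β : ℝ} (hτp : 0 < τp) (hβ : τp / (τp + τn) < β)
include hτp hβ

theorem balance_slope_pos (hτn : 0 < τn) : 0 < β * (τn + τp) - τp := by
  rw [div_lt_iff₀ (by positivity)] at hβ
  linarith

theorem balance_offset_lt_slope_mul {l : ℝ} (hτn : τp < τn) (hl : 1 / τp ≤ l) :
    2 * β - 1 < (β * (τn + τp) - τp) * l := by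
  have ha := balance_slope_pos hτp hβ (hτp.trans hτn)
  have hβ0 : 0 < β := (div_pos hτp (by linarith)).trans hβ
  -- `(β (τ_n + τ_p) - τ_p) - τ_p (2β - 1) = β (τ_n - τ_p) > 0`
  calc 2 * β - 1 < (β * (τn + τp) - τp) * (1 / τp) := by
        rw [mul_one_div, lt_div_iff₀ hτp]
        nlinarith
    _ ≤ (β * (τn + τp) - τp) * l := by gcongr

end Balance

theorem stmt3 (τl τp τn β k : ℝ)
    (hτl : 0 < τl) (hτp : τl < τp) (hτn : τp < τn)
    (hβ : β ∈ Set.Ioc (τp / (τp + τn)) 1) (hk : 0 < k) :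
    ∀ ω : ℝ,
      0 < (G τl τp τn k β (-(((1/τl + 1/τp)/2 : ℝ) : ℂ) + Complex.I * (ω : ℂ))).re := by
  intro ω
  have hτp0 : 0 < τp := hτl.trans hτp
  have hprod := mul_add_one_mul_add_one_at_midpoint hτl.ne' hτp0.ne' ω
  set l : ℝ := (1/τl + 1/τp)/2 with hl
  set R : ℝ := τl * τp * (((1/τl - 1/τp)/2) ^ 2 + ω ^ 2)
  have hinv := one_div_lt_one_div_of_lt hτl hτp
  have hR : 0 < R := by
    have : 0 < ((1/τl - 1/τp)/2) ^ 2 := pow_pos (by linarith) 2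
    positivity
  have hlp : 1 / τp < l := by rw [hl]; linarith
  have hln : 1 < τn * l := by
    have := one_div_lt_one_div_of_lt hτp0 hτn
    exact (div_lt_iff₀' (hτp0.trans hτn)).1 (by linarith)
  clear_value l R
  have hG : G τl τp τn k β (-(l : ℂ) + I * ω) = ((k / R : ℝ) : ℂ) *
      ((((β * (τn + τp) - τp : ℝ) : ℂ) * (-(l : ℂ) + I * ω) + ((2 * β - 1 : ℝ) : ℂ)) /
        ((τn : ℂ) * (-(l : ℂ) + I * ω) + 1)) := by
    rw [G, hprod, ofReal_div, mul_div_mul_comm, neg_div_neg_eq]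
  rw [hG, re_ofReal_mul]
  refine mul_pos (div_pos hk hR) (re_affine_div_affine_pos ?_ ?_ hln)
  · exact (mul_pos (balance_slope_pos hτp0 hβ.1 (hτp0.trans hτn)) (hτp0.trans hτn)).le
  · exact balance_offset_lt_slope_mul hτp0 hβ.1 hτn hlp.le
end

section
/- Let 0 < τ_1 < τ_2 < ... < τ_{m+n}, let ρ_1, ..., ρ_{m+n} > 0 with Σ_{i=1}^{m} ρ_i = 1 and Σ_{i=m+1}^{m+n} ρ_i = 1, and let β ∈ (0,1). Define C(s) = β·Σ_{i=1}^{m} ρ_i/(τ_i·s + 1) − (1−β)·Σ_{i=m+1}^{m+n} ρ_i/(τ_i·s + 1). Then for every index i with 1 ≤ i ≤ m+n−1 and i ≠ m, there exists a real z in the open interval (−1/τ_i, −1/τ_{i+1}) such that C(z) = 0. In particular, C has m−1 real zeros interlaced with the poles of the positive-feedback block and n−1 real zeros interlaced with the poles of the negative-feedback block. -/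
/-!
Between two consecutive poles `-1/τ_i < -1/τ_{i+1}` every denominator `τ_j z + 1` keeps its sign,
so `C` is continuous there. If both poles belong to the same block, their residues in `C` have
the same sign; say positive. Then `C → +∞` as `z ↓ -1/τ_i` and `C → -∞` as `z ↑ -1/τ_{i+1}`,
because `ρ/(τ z + 1)` changes sign across its pole, and the intermediate value theorem gives a zero.
-/

open Filter Topology Set Finset

lemma tendsto_div_mul_add_one_nhdsGT {τ c : ℝ} (hτ : 0 < τ) (hc : 0 < c) :
    Tendsto (fun z => c / (τ * z + 1)) (𝓝[>] (-1 / τ)) atTop := by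
  have hmaps : MapsTo (fun z => τ * z + 1) (Ioi (-1 / τ)) (Ioi 0) := fun z hz => by
    have := (div_lt_iff₀ hτ).1 hz
    show 0 < τ * z + 1
    linarith
  have hlin : Tendsto (fun z => τ * z + 1) (𝓝[>] (-1 / τ)) (𝓝[>] 0) := by
    convert (Continuous.continuousWithinAt (by fun_prop)).tendsto_nhdsWithin hmaps using 2
    field_simp
    ring
  exact (hlin.inv_tendsto_nhdsGT_zero.const_mul_atTop hc).congr fun _ => (div_eq_mul_inv _ _).symm

lemma tendsto_div_mul_add_one_nhdsLT {τ c : ℝ} (hτ : 0 < τ) (hc : 0 < c) :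
    Tendsto (fun z => c / (τ * z + 1)) (𝓝[<] (-1 / τ)) atBot := by
  have hmaps : MapsTo (fun z => τ * z + 1) (Iio (-1 / τ)) (Iio 0) := fun z hz => by
    have := (lt_div_iff₀ hτ).1 hz
    show τ * z + 1 < 0
    linarith
  have hlin : Tendsto (fun z => τ * z + 1) (𝓝[<] (-1 / τ)) (𝓝[<] 0) := by
    convert (Continuous.continuousWithinAt (by fun_prop)).tendsto_nhdsWithin hmaps using 2
    field_simp
    ring
  exact (hlin.inv_tendsto_nhdsLT_zero.const_mul_atBot hc).congr fun _ => (div_eq_mul_inv _ _).symm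

section SumWithPole

variable {ι : Type*} {s : Finset ι} {f : ι → ℝ → ℝ} {p : ι} {x : ℝ} {l : Filter ℝ}

lemma tendsto_sum_atTop_of_tendsto_atTop (hp : p ∈ s) (hl : l ≤ 𝓝 x)
    (hfp : Tendsto (f p) l atTop) (hf : ∀ j ∈ s, j ≠ p → ContinuousAt (f j) x) :
    Tendsto (fun z => ∑ j ∈ s, f j z) l atTop := by
  classical
  exact (hfp.atTop_add (tendsto_finsetSum _ fun j hj =>
      ((hf j (mem_of_mem_erase hj) (ne_of_mem_erase hj)).tendsto.mono_left hl))).congr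
    fun z => add_sum_erase s (f · z) hp

lemma tendsto_sum_atBot_of_tendsto_atBot (hp : p ∈ s) (hl : l ≤ 𝓝 x)
    (hfp : Tendsto (f p) l atBot) (hf : ∀ j ∈ s, j ≠ p → ContinuousAt (f j) x) :
    Tendsto (fun z => ∑ j ∈ s, f j z) l atBot := by
  classical
  exact (hfp.atBot_add (tendsto_finsetSum _ fun j hj =>
      ((hf j (mem_of_mem_erase hj) (ne_of_mem_erase hj)).tendsto.mono_left hl))).congr
    fun z => add_sum_erase s (f · z) hp

end SumWithPole

theorem exists_sum_div_mul_add_one_eq_zero {ι : Type*} (s : Finset ι) (τ c : ι → ℝ) {i k : ι}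
    (hi : i ∈ s) (hk : k ∈ s) (hτi : 0 < τ i) (hτik : τ i < τ k) (hci : 0 < c i) (hck : 0 < c k)
    (hgap : ∀ j ∈ s, τ j ∈ Icc (τ i) (τ k) → j = i ∨ j = k) :
    ∃ z ∈ Ioo (-1 / τ i) (-1 / τ k), ∑ j ∈ s, c j / (τ j * z + 1) = 0 := by
  set a := -1 / τ i
  set b := -1 / τ k
  have hτk : 0 < τ k := hτi.trans hτik
  have hab : a < b := by
    rw [div_lt_div_iff₀ hτi hτk]
    linarith
  have hia : ∀ {z}, a < z → 0 < τ i * z + 1 := fun hz => by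
    linarith [(div_lt_iff₀ hτi).1 hz]
  have hkb : ∀ {z}, z < b → τ k * z + 1 < 0 := fun hz => by
    linarith [(lt_div_iff₀ hτk).1 hz]
  -- a root of `τ j * z + 1` in `[a, b]` is `-1/τ j`, so `τ j ∈ [τ i, τ k]`
  have hroot : ∀ z ∈ Icc a b, ∀ j ∈ s, τ j * z + 1 = 0 → j = i ∨ j = k := by
    rintro z ⟨haz, hzb⟩ j hj hjz
    have hz : z < 0 := hzb.trans_lt (div_neg_of_neg_of_pos (by norm_num) hτk)
    have hiz := (div_le_iff₀ hτi).1 haz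
    have hkz := (le_div_iff₀ hτk).1 hzb
    exact hgap j hj ⟨by nlinarith, by nlinarith⟩
  have hcont : ∀ j ∈ s, ∀ z, τ j * z + 1 ≠ 0 → ContinuousAt (fun z => c j / (τ j * z + 1)) z :=
    fun j _ z hz => continuousAt_const.div (by fun_prop) hz
  have hpos : Tendsto (fun z => ∑ j ∈ s, c j / (τ j * z + 1)) (𝓝[>] a) atTop := by
    refine tendsto_sum_atTop_of_tendsto_atTop hi nhdsWithin_le_nhds
      (tendsto_div_mul_add_one_nhdsGT hτi hci) fun j hj hji => hcont j hj a fun hja => ?_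
    rcases hroot a ⟨le_rfl, hab.le⟩ j hj hja with rfl | rfl
    exacts [hji rfl, (hkb hab).ne hja]
  have hneg : Tendsto (fun z => ∑ j ∈ s, c j / (τ j * z + 1)) (𝓝[<] b) atBot := by
    refine tendsto_sum_atBot_of_tendsto_atBot hk nhdsWithin_le_nhds
      (tendsto_div_mul_add_one_nhdsLT hτk hck) fun j hj hjk => hcont j hj b fun hjb => ?_
    rcases hroot b ⟨hab.le, le_rfl⟩ j hj hjb with rfl | rfl
    exacts [(hia hab).ne' hjb, hjk rfl]
  have hcontOn : ContinuousOn (fun z => ∑ j ∈ s, c j / (τ j * z + 1)) (Ioo a b) := by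
    refine continuousOn_finsetSum s fun j hj z hz =>
      (hcont j hj z fun hjz => ?_).continuousWithinAt
    rcases hroot z (Ioo_subset_Icc_self hz) j hj hjz with rfl | rfl
    exacts [(hia hz.1).ne' hjz, (hkb hz.2).ne hjz]
  exact isPreconnected_Ioo.intermediate_value_Iii
    (le_principal_iff.2 (Ioo_mem_nhdsLT hab)) (le_principal_iff.2 (Ioo_mem_nhdsGT hab))
    hcontOn hneg hpos (mem_univ 0)

lemma mul_sum_range_sub_mul_sum_Ico (m n : ℕ) (a b : ℝ) (g : ℕ → ℝ) :
    a * ∑ j ∈ range m, g j - b * ∑ j ∈ Ico m (m + n), g j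
      = ∑ j ∈ range (m + n), (if j < m then a else -b) * g j := by
  rw [← sum_range_add_sum_Ico _ (Nat.le_add_right m n), mul_sum, mul_sum, sub_eq_add_neg,
    ← sum_neg_distrib]
  congr 1 <;> refine sum_congr rfl fun j hj => ?_
  · rw [if_pos (mem_range.1 hj)]
  · rw [if_neg (not_lt.2 (mem_Ico.1 hj).1), neg_mul]

lemma eq_or_eq_add_one_of_mem_Icc {N i j : ℕ} {τ : ℕ → ℝ}
    (hτ : ∀ i j, i < j → j < N → τ i < τ j) (hi : i + 1 < N) (hj : j < N)
    (h : τ j ∈ Icc (τ i) (τ (i + 1))) : j = i ∨ j = i + 1 := by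
  by_contra! hne
  rcases lt_or_gt_of_ne hne.1 with hlt | hgt
  · exact (hτ j i hlt (by omega)).not_ge h.1
  · exact (hτ (i + 1) j (by omega) hj).not_ge h.2

theorem stmt6_general (m n : ℕ) (τ ρ : ℕ → ℝ) (β : ℝ)
    (hτpos : ∀ i < m + n, 0 < τ i)
    (hτmono : ∀ i j, i < j → j < m + n → τ i < τ j)
    (hρ : ∀ i < m + n, 0 < ρ i)
    (hβ : β ∈ Set.Ioo (0:ℝ) 1) :
    ∀ i, i + 1 < m + n → i + 1 ≠ m →
      ∃ z ∈ Set.Ioo (-1 / τ i) (-1 / τ (i + 1)),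
        β * ∑ j ∈ Finset.range m, ρ j / (τ j * z + 1)
          - (1 - β) * ∑ j ∈ Finset.Ico m (m + n), ρ j / (τ j * z + 1) = 0 := by
  intro i hi him
  obtain ⟨hβ0, hβ1⟩ := hβ
  simp_rw [mul_sum_range_sub_mul_sum_Ico, ← mul_div_assoc]
  have hgap : ∀ j ∈ range (m + n), τ j ∈ Icc (τ i) (τ (i + 1)) → j = i ∨ j = i + 1 :=
    fun j hj => eq_or_eq_add_one_of_mem_Icc hτmono hi (mem_range.1 hj)
  have hmem : i ∈ range (m + n) ∧ i + 1 ∈ range (m + n) := ⟨mem_range.2 (by omega), mem_range.2 hi⟩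
  have hτi := hτpos i (by omega)
  have hτ := hτmono i (i + 1) (by omega) hi
  rcases lt_or_gt_of_ne him with hlt | hgt
  · have hc : ∀ j < m, 0 < (if j < m then β else -(1 - β)) * ρ j := fun j hj => by
      rw [if_pos hj]
      exact mul_pos hβ0 (hρ j (by omega))
    exact exists_sum_div_mul_add_one_eq_zero _ τ _ hmem.1 hmem.2 hτi hτ
      (hc i (by omega)) (hc (i + 1) hlt) hgap
  · have hc : ∀ j, m ≤ j → j < m + n → 0 < -((if j < m then β else -(1 - β)) * ρ j) :=
      fun j hmj hj => by
        rw [if_neg (not_lt.2 hmj), neg_mul, neg_neg]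
        exact mul_pos (sub_pos.2 hβ1) (hρ j hj)
    obtain ⟨z, hz, hz0⟩ := exists_sum_div_mul_add_one_eq_zero _ τ
      (fun j => -((if j < m then β else -(1 - β)) * ρ j)) hmem.1 hmem.2 hτi hτ (hc i (by omega) (by omega)) (hc (i + 1) (by omega) hi) hgap
    exact ⟨z, hz, by simpa only [neg_div, sum_neg_distrib, neg_eq_zero] using hz0⟩

theorem stmt6 (m n : ℕ) (τ ρ : ℕ → ℝ) (β : ℝ)
    (hτpos : ∀ i < m + n, 0 < τ i)
    (hτmono : ∀ i j, i < j → j < m + n → τ i < τ j)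
    (hρ : ∀ i < m + n, 0 < ρ i)
    (hρp : ∑ i ∈ Finset.range m, ρ i = 1)
    (hρn : ∑ i ∈ Finset.Ico m (m + n), ρ i = 1)
    (hβ : β ∈ Set.Ioo (0:ℝ) 1) :
    ∀ i, i + 1 < m + n → i + 1 ≠ m →
      ∃ z ∈ Set.Ioo (-1 / τ i) (-1 / τ (i + 1)),
        β * ∑ j ∈ Finset.range m, ρ j / (τ j * z + 1)
          - (1 - β) * ∑ j ∈ Finset.Ico m (m + n), ρ j / (τ j * z + 1) = 0 :=
  stmt6_general m n τ ρ β hτpos hτmono hρ hβ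
end

section
/- Let 0 < τ_1 < τ_2 < ... < τ_{m+n} and ρ_1, ..., ρ_{m+n} > 0. Define Cp(s) = Σ_{i=1}^{m} ρ_i/(τ_i·s + 1) and Cn(s) = Σ_{i=m+1}^{m+n} ρ_i/(τ_i·s + 1). Then for every real z₀ with z₀ < −1/τ_1 or z₀ > −1/τ_{m+n}, the number β₀ = Cn(z₀)/(Cp(z₀) + Cn(z₀)) is well defined (the denominator is nonzero), satisfies β₀ ∈ (0,1), and the function C(s) = β₀·Cp(s) − (1−β₀)·Cn(s) vanishes at z₀, i.e. C(z₀) = 0. -/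
lemma aux8 (a b : ℝ) (ha : 0 < a) (hb : 0 < b) :
    a + b ≠ 0 ∧ b / (a + b) ∈ Set.Ioo (0:ℝ) 1 ∧
      (b / (a + b)) * a - (1 - b / (a + b)) * b = 0 := by
  have hab : 0 < a + b := by linarith
  refine ⟨ne_of_gt hab, ⟨div_pos hb hab, (div_lt_one hab).mpr (by linarith)⟩, ?_⟩
  field_simp
  ring

theorem stmt8 (m n : ℕ) (τ ρ : ℕ → ℝ)
    (hm : 0 < m) (hn : 0 < n)
    (hτpos : ∀ i < m + n, 0 < τ i)
    (hτmono : ∀ i j, i < j → j < m + n → τ i < τ j)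
    (hρ : ∀ i < m + n, 0 < ρ i) :
    ∀ z₀ : ℝ, z₀ < -1 / τ 0 ∨ -1 / τ (m + n - 1) < z₀ →
      let Cp : ℝ → ℝ := fun s => ∑ i ∈ Finset.range m, ρ i / (τ i * s + 1)
      let Cn : ℝ → ℝ := fun s => ∑ i ∈ Finset.Ico m (m + n), ρ i / (τ i * s + 1)
      Cp z₀ + Cn z₀ ≠ 0 ∧
      Cn z₀ / (Cp z₀ + Cn z₀) ∈ Set.Ioo (0:ℝ) 1 ∧
      (Cn z₀ / (Cp z₀ + Cn z₀)) * Cp z₀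
        - (1 - Cn z₀ / (Cp z₀ + Cn z₀)) * Cn z₀ = 0 := by
  intro z₀ hz₀ Cp Cn
  have hmn : 0 < m + n := by omega
  have hτle : ∀ i, i < m + n → τ 0 ≤ τ i ∧ τ i ≤ τ (m + n - 1) := by
    intro i hi
    constructor
    · rcases Nat.eq_zero_or_pos i with h | h
      · simp [h]
      · exact le_of_lt (hτmono 0 i h hi)
    · rcases Nat.lt_or_ge i (m + n - 1) with h | h
      · exact le_of_lt (hτmono i (m + n - 1) h (by omega))
      · have : i = m + n - 1 := by omega
        simp [this]
  -- same sign for all denominators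
  have key : (∀ i < m + n, 0 < τ i * z₀ + 1) ∨ (∀ i < m + n, τ i * z₀ + 1 < 0) := by
    rcases hz₀ with h | h
    · right
      intro i hi
      have hτi := hτpos i hi
      have h0 := hτpos 0 hmn
      have hle := (hτle i hi).1
      have h1 : -1 / τ 0 ≤ -1 / τ i := by
        rw [div_le_div_iff₀ h0 hτi]; nlinarith
      have h2 : z₀ < -1 / τ i := lt_of_lt_of_le h h1
      have h3 := (lt_div_iff₀ hτi).mp h2
      nlinarith
    · left
      intro i hi
      have hτi := hτpos i hi
      have hlast := hτpos (m + n - 1) (by omega)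
      have hle := (hτle i hi).2
      have h1 : -1 / τ i ≤ -1 / τ (m + n - 1) := by
        rw [div_le_div_iff₀ hτi hlast]; nlinarith
      have h2 : -1 / τ i < z₀ := lt_of_le_of_lt h1 h
      have := (div_lt_iff₀ hτi).mp h2
      nlinarith
  rcases key with key | key
  · have hCp : 0 < Cp z₀ := by
      apply Finset.sum_pos
      · intro i hi
        simp only [Finset.mem_range] at hi
        exact div_pos (hρ i (by omega)) (key i (by omega))
      · exact ⟨0, Finset.mem_range.mpr hm⟩
    have hCn : 0 < Cn z₀ := by
      apply Finset.sum_pos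
      · intro i hi
        simp only [Finset.mem_Ico] at hi
        exact div_pos (hρ i hi.2) (key i hi.2)
      · exact ⟨m, Finset.mem_Ico.mpr ⟨le_refl m, by omega⟩⟩
    exact aux8 _ _ hCp hCn
  · have hCp : Cp z₀ < 0 := by
      apply Finset.sum_neg
      · intro i hi
        simp only [Finset.mem_range] at hi
        exact div_neg_of_pos_of_neg (hρ i (by omega)) (key i (by omega))
      · exact ⟨0, Finset.mem_range.mpr hm⟩
    have hCn : Cn z₀ < 0 := by
      apply Finset.sum_neg
      · intro i hi
        simp only [Finset.mem_Ico] at hi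
        exact div_neg_of_pos_of_neg (hρ i hi.2) (key i hi.2)
      · exact ⟨m, Finset.mem_Ico.mpr ⟨le_refl m, by omega⟩⟩
    obtain ⟨h1, h2, h3⟩ := aux8 (-(Cp z₀)) (-(Cn z₀)) (by linarith) (by linarith)
    have e1 : -(Cp z₀) + -(Cn z₀) = -(Cp z₀ + Cn z₀) := by ring
    have e2 : Cn z₀ / (Cp z₀ + Cn z₀) = -(Cn z₀) / (-(Cp z₀) + -(Cn z₀)) := by
      rw [e1, neg_div_neg_eq]
    refine ⟨fun h => h1 (by rw [e1, h, neg_zero]), by rw [e2]; exact h2, ?_⟩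
    rw [e2]
    nlinarith [h3]
end
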